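/- arXiv:1202.5430 — 7 statements merged into one kernel-verified Lean document; each statement's English description precedes it below -/
import Mathlib

section
/- Let q > 1 and n ≥ 3 be integers and p a prime such that (q^n - 1)/(q - 1) = p^f for some positive integer f. Then n is odd. -/
/-!
If `n = 2m` is even, then `1 + q + ⋯ + q^(n-1) = (1 + q + ⋯ + q^(m-1)) (q^m + 1)`, and both factors
exceed `1`, so the prime `p` divides both. Since `(q - 1)(1 + ⋯ + q^(m-1)) = q^m - 1`, `p` divides
`(q^m + 1) - (q^m - 1) = 2`, so `p = 2` and `q` is odd. The first factor then has the parity of `m`,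
so `m` is even, `q^m` is an odd square and `q^m + 1 ≡ 2 (mod 4)`: a power of two that is `≡ 2 (mod 4)`
equals `2`, which forces `q^m = 1`.
-/

open Finset

lemma geom_sum_two_mul {R : Type*} [CommSemiring R] (x : R) (m : ℕ) :
    ∑ i ∈ range (2 * m), x ^ i = (∑ i ∈ range m, x ^ i) * (x ^ m + 1) := by
  rw [two_mul, sum_range_add, mul_add, mul_one, sum_mul, add_comm]
  simp only [pow_add, mul_comm]

lemma Nat.odd_geom_sum_iff {q : ℕ} (hq : Odd q) (m : ℕ) :
    Odd (∑ i ∈ range m, q ^ i) ↔ Odd m := by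
  rw [odd_sum_iff_odd_card_odd, filter_true_of_mem fun i _ ↦ hq.pow, card_range]

lemma Nat.dvd_two_of_dvd_geom_sum_of_dvd_pow_add_one {p q m : ℕ}
    (hS : p ∣ ∑ i ∈ range m, q ^ i) (hB : p ∣ q ^ m + 1) : p ∣ 2 := by
  have hS' : (p : ℤ) ∣ ((q : ℤ) - 1) * ∑ i ∈ range m, (q : ℤ) ^ i :=
    Dvd.dvd.mul_left (by exact_mod_cast hS) _
  have hB' : (p : ℤ) ∣ (q : ℤ) ^ m + 1 := by exact_mod_cast hB
  have h := hB'.sub hS'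
  rw [mul_geom_sum, show (q : ℤ) ^ m + 1 - ((q : ℤ) ^ m - 1) = 2 by ring] at h
  exact_mod_cast h

lemma Nat.Prime.dvd_of_dvd_pow_of_one_lt {p a f : ℕ} (hp : p.Prime) (ha : a ∣ p ^ f)
    (h1 : 1 < a) : p ∣ a := by
  obtain ⟨i, -, rfl⟩ := (Nat.dvd_prime_pow hp).1 ha
  exact dvd_pow_self p fun hi ↦ by simp [hi] at h1

lemma Nat.sq_add_one_mod_four {a : ℕ} (ha : Odd a) : (a ^ 2 + 1) % 4 = 2 := by
  obtain ⟨t, rfl⟩ := ha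
  ring_nf
  omega

lemma Nat.eq_two_of_dvd_two_pow_of_mod_four_eq_two {d f : ℕ} (hd : d ∣ 2 ^ f) (h : d % 4 = 2) :
    d = 2 := by
  obtain ⟨b, -, rfl⟩ := (Nat.dvd_prime_pow Nat.prime_two).1 hd
  match b with
  | 0 => simp at h
  | 1 => rfl
  | b + 2 => simp [pow_add, Nat.mul_mod_left] at h

lemma Nat.geom_sum_two_mul_ne_prime_pow {q m p f : ℕ} (hq : 1 < q) (hm : 2 ≤ m) (hp : p.Prime) :
    ∑ i ∈ range (2 * m), q ^ i ≠ p ^ f := by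
  intro h
  rw [geom_sum_two_mul] at h
  set A := ∑ i ∈ range m, q ^ i
  have hA : 1 < A :=
    calc 1 < q + 1 := by omega
      _ = ∑ i ∈ range 2, q ^ i := geom_sum_two.symm
      _ ≤ A := sum_le_sum_of_subset (range_subset_range.2 hm)
  have hB : 1 < q ^ m + 1 := by have := Nat.one_le_pow m q (by omega); omega
  have hpA := hp.dvd_of_dvd_pow_of_one_lt (Dvd.intro _ h) hA
  have hpB := hp.dvd_of_dvd_pow_of_one_lt (Dvd.intro_left _ h) hB
  obtain rfl : p = 2 :=
    (Nat.prime_dvd_prime_iff_eq hp Nat.prime_two).1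
      (dvd_two_of_dvd_geom_sum_of_dvd_pow_add_one hpA hpB)
  have hq_odd : Odd q := by
    have : Even (q ^ m + 1) := even_iff_two_dvd.2 hpB
    rw [Nat.even_add_one, Nat.even_pow' (by omega), Nat.not_even_iff_odd] at this
    exact this
  obtain ⟨k, rfl⟩ : Even m := by
    rw [← Nat.not_odd_iff_even, ← odd_geom_sum_iff hq_odd, Nat.not_odd_iff_even]
    exact even_iff_two_dvd.2 hpA
  have hB2 : q ^ (k + k) + 1 = 2 := by
    refine eq_two_of_dvd_two_pow_of_mod_four_eq_two (Dvd.intro_left _ h) ?_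
    rw [← two_mul, pow_mul', sq_add_one_mod_four hq_odd.pow]
  have : q ^ (k + k) = 1 := by omega
  rw [pow_eq_one_iff] at this
  omega

theorem stmt0_general (q n f p : ℕ) (hq : 1 < q) (hn : 3 ≤ n) (hp : p.Prime)
    (h : (q ^ n - 1) / (q - 1) = p ^ f) : Odd n := by
  by_contra hn_odd
  obtain ⟨m, rfl⟩ : ∃ m, n = 2 * m := (Nat.not_odd_iff_even.1 hn_odd).two_dvd
  rw [← Nat.geomSum_eq hq] at h
  exact Nat.geom_sum_two_mul_ne_prime_pow hq (by omega) hp h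

theorem stmt0 (q n f p : ℕ) (hq : 1 < q) (hn : 3 ≤ n) (hp : p.Prime)
    (hf : 0 < f) (h : (q ^ n - 1) / (q - 1) = p ^ f) : Odd n :=
  stmt0_general q n f p hq hn hp h
end

section
/- Let G be a finite group, p a prime, P a Sylow p-subgroup, and K a normal p-complement of G (i.e., K is a normal subgroup of order |G|/|P| with K ∩ P = 1 and G = KP). Let H = O^{p'}(G) be the smallest normal subgroup with quotient of order prime to p, and S = H ∩ K. Define L to be the intersection of all normal subgroups T of K such that P normalizes T and P acts trivially on K/T. Then L = S. -/
/-!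
A Sylow subgroup lies in every normal subgroup of index prime to `p`, so `P ≤ H` and `H ∩ K`
is one of the subgroups `T`. Conversely, for such a `T` the subgroup `TP` is normal (modulo `T`,
`K` centralizes `P`) and has index prime to `p`, so `H ≤ TP` and `H ∩ K ≤ TP ∩ K = T` because
`P ∩ K = 1`.
-/

open scoped commutatorElement

namespace Subgroup

variable {G : Type*} [Group G]

theorem le_of_isPGroup_of_not_dvd_index {p : ℕ} [Fact p.Prime] {Q N : Subgroup G} [Finite Q]
    (hQ : IsPGroup p Q) [N.Normal] (hN : ¬ p ∣ N.index) : Q ≤ N := by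
  obtain ⟨k, hk⟩ := hQ.exists_card_eq
  rw [← relIndex_eq_one]
  exact Nat.eq_one_of_dvd_coprimes ((Fact.out : p.Prime).coprime_pow_of_not_dvd hN)
    (relIndex_dvd_index_of_normal N Q) (hk ▸ relIndex_dvd_card N Q)

theorem normal_of_le_normalizer_of_sup_eq_top {T K Q : Subgroup G} (hKQ : K ⊔ Q = ⊤)
    (hK : K ≤ normalizer T) (hQ : Q ≤ normalizer T) : T.Normal :=
  normalizer_eq_top_iff.mp (top_unique (hKQ ▸ sup_le hK hQ))

theorem normal_sup_of_commutator_le {T K Q : Subgroup G} [T.Normal] (hKQ : K ⊔ Q = ⊤)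
    (hQK : ⁅Q, K⁆ ≤ T) : (T ⊔ Q).Normal := by
  refine normal_of_le_normalizer_of_sup_eq_top hKQ ?_ (le_sup_right.trans le_normalizer)
  rw [le_normalizer_iff]
  intro k hk x hx
  obtain ⟨t, ht, q, hq, rfl⟩ := mem_sup_of_normal_left.mp hx
  have hkq : ⁅k, q⁆ ∈ T := hQK (commutator_comm K Q ▸ commutator_mem_commutator hk hq)
  have hconj : k * (t * q) * k⁻¹ = k * t * k⁻¹ * ⁅k, q⁆ * q := by
    simp only [commutatorElement_def]; group
  rw [hconj]
  exact mul_mem (mul_mem (mem_sup_left (Normal.conj_mem inferInstance t ht k))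
    (mem_sup_left hkq)) (mem_sup_right hq)

theorem sup_inf_eq_of_le_of_disjoint {T K Q : Subgroup G} [T.Normal] (hTK : T ≤ K)
    (hKQ : Disjoint K Q) : (T ⊔ Q) ⊓ K = T := by
  refine le_antisymm ?_ (le_inf le_sup_left hTK)
  rintro _ ⟨hx, hxK⟩
  obtain ⟨t, ht, q, hq, rfl⟩ := mem_sup_of_normal_left.mp hx
  have hqK : q ∈ K := by simpa using mul_mem (inv_mem (hTK ht)) hxK
  rw [disjoint_def.mp hKQ hqK hq, mul_one]
  exact ht

end Subgroup

open Subgroup in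
theorem stmt6 {G : Type*} [Group G] [Fintype G] {p : ℕ} [Fact p.Prime]
    (P : Sylow p G) (K : Subgroup G) (hKn : K.Normal)
    (hcompl : Subgroup.IsComplement' K (P : Subgroup G))
    (H : Subgroup G) (hHn : H.Normal) (hHp : ¬ p ∣ H.index)
    (hHmin : ∀ H' : Subgroup G, H'.Normal → ¬ p ∣ H'.index → H ≤ H') :
    sInf {T : Subgroup G | T ≤ K ∧ K ≤ Subgroup.normalizer (T : Set G) ∧
        (P : Subgroup G) ≤ Subgroup.normalizer (T : Set G) ∧ ⁅(P : Subgroup G), K⁆ ≤ T}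
      = H ⊓ K := by
  have hKP : K ⊔ P = ⊤ := hcompl.sup_eq_top
  have hPH : (P : Subgroup G) ≤ H := le_of_isPGroup_of_not_dvd_index P.isPGroup' hHp
  refine le_antisymm (sInf_le ⟨inf_le_right, le_normalizer_of_normal, le_normalizer_of_normal,
    le_inf ((commutator_mono hPH le_rfl).trans (commutator_le_left H K))
      (commutator_le_right _ _)⟩) ?_
  refine le_sInf fun T ⟨hTK, hKT, hPT, hPKT⟩ => ?_
  have hT : T.Normal := normal_of_le_normalizer_of_sup_eq_top hKP hKT hPT
  have hHTP : H ≤ T ⊔ P := hHmin _ (normal_sup_of_commutator_le hKP hPKT)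
    fun hdvd => P.not_dvd_index (hdvd.trans (index_dvd_of_le le_sup_right))
  calc H ⊓ K ≤ (T ⊔ P) ⊓ K := inf_le_inf_right K hHTP
    _ = T := sup_inf_eq_of_le_of_disjoint hTK hcompl.disjoint
end

section
/- Let G be a finite group with normal p-complement K, H = O^{p'}(G), P a Sylow p-subgroup, and L as the intersection of all normal subgroups T of K normalized by P with [P,K] ≤ T. Then N_H(P) = P if and only if C_L(P) = 1. -/
/-!
Since `K` and `P` generate `G`, the commutator `C = [P, K]` is normal in `G`, and it is the
smallest candidate in the intersection defining `L`, so `L = C`. In `G / C` the images of `P`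
and `K` commute, so the image of `P` is normal and `CP` is a normal subgroup of `p'`-index;
as `O^{p'}(G)` contains every `p`-subgroup and is normal, `H = CP`. Finally, for a normal
subgroup `C` meeting `P` trivially, an element `c ∈ C` normalizing `P` satisfies
`[c, P] ≤ C ∩ P = 1`, so `N_{CP}(P) = C_C(P) P`, which equals `P` exactly when `C_C(P) = 1`.
-/

namespace IsPGroup

theorem le_of_normal_of_not_dvd_index {G : Type*} [Group G] {p : ℕ} [Fact p.Prime]
    {Q N : Subgroup G} (hQ : IsPGroup p Q) [N.Normal] (hN : ¬ p ∣ N.index) : Q ≤ N := by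
  have hdvd : N.relIndex Q ∣ N.index := N.relIndex_dvd_index_of_normal Q
  have : (N.subgroupOf Q).FiniteIndex :=
    ⟨ne_zero_of_dvd_ne_zero (fun h0 : N.index = 0 => hN (h0 ▸ dvd_zero p)) hdvd⟩
  obtain ⟨k, hk⟩ := hQ.index (N.subgroupOf Q)
  rw [← Subgroup.relIndex_eq_one]
  exact Nat.eq_one_of_dvd_coprimes ((Fact.out : p.Prime).coprime_pow_of_not_dvd hN)
    hdvd hk.dvd

end IsPGroup

namespace Subgroup

variable {G : Type*} [Group G]

theorem normal_commutator_of_sup_eq_top {A B : Subgroup G} (h : A ⊔ B = ⊤) :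
    ⁅A, B⁆.Normal := by
  rw [← normalizer_eq_top_iff, ← top_le_iff, ← h]
  exact sup_le (normalizer_commutator_ge_left A B) (normalizer_commutator_ge_right A B)

theorem normal_commutator_sup_of_sup_eq_top {A B : Subgroup G} (h : A ⊔ B = ⊤) :
    (⁅A, B⁆ ⊔ A).Normal := by
  have := normal_commutator_of_sup_eq_top h
  set π := QuotientGroup.mk' ⁅A, B⁆
  have hcomm : map π B ≤ centralizer (map π A) := by
    rw [← commutator_eq_bot_iff_le_centralizer, commutator_comm (map π B), ← map_commutator,
      map_eq_bot_iff]
    exact (QuotientGroup.ker_mk' _).ge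
  have hnormal : (map π A).Normal := by
    rw [← normalizer_eq_top_iff, ← top_le_iff,
      ← map_top_of_surjective π (QuotientGroup.mk'_surjective _), ← h, map_sup]
    exact sup_le le_normalizer (hcomm.trans (centralizer_le_normalizer _))
  rw [sup_comm, ← QuotientGroup.ker_mk' ⁅A, B⁆, ← comap_map_eq]
  exact hnormal.comap π

theorem inf_normalizer_le_centralizer_of_disjoint {C Q : Subgroup G} [C.Normal]
    (hCQ : Disjoint C Q) : C ⊓ normalizer Q ≤ centralizer Q := by
  rw [← commutator_eq_bot_iff_le_centralizer, ← le_bot_iff, ← hCQ.eq_bot]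
  exact le_inf ((commutator_mono inf_le_left le_rfl).trans (commutator_le_left C Q))
    (le_normalizer_iff_commutator_le_right.mp inf_le_right)

theorem sup_inf_normalizer_eq_iff_inf_centralizer_eq_bot {C Q : Subgroup G} [C.Normal]
    (hCQ : Disjoint C Q) : (C ⊔ Q) ⊓ normalizer Q = Q ↔ C ⊓ centralizer Q = ⊥ := by
  constructor
  · intro h
    refine le_bot_iff.mp ?_
    calc C ⊓ centralizer Q
        ≤ C ⊓ ((C ⊔ Q) ⊓ normalizer Q) :=
          le_inf inf_le_left <| le_inf (inf_le_left.trans le_sup_left)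
            (inf_le_right.trans (centralizer_le_normalizer _))
      _ = ⊥ := by rw [h, hCQ.eq_bot]
  · intro h
    refine le_antisymm ?_ (le_inf le_sup_right le_normalizer)
    rintro x ⟨hx, hxN⟩
    obtain ⟨c, hc, q, hq, rfl⟩ := mem_sup_of_normal_left.mp hx
    have hcN : c ∈ normalizer Q := by
      simpa using mul_mem hxN (le_normalizer (inv_mem hq))
    have hc1 : c = 1 := by
      rw [← mem_bot, ← h]
      exact ⟨hc, inf_normalizer_le_centralizer_of_disjoint hCQ ⟨hc, hcN⟩⟩
    simpa [hc1] using hq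

end Subgroup

open Subgroup in
theorem stmt7 {G : Type*} [Group G] [Fintype G] {p : ℕ} [Fact p.Prime]
    (P : Sylow p G) (K : Subgroup G) (hKn : K.Normal)
    (hcompl : Subgroup.IsComplement' K (P : Subgroup G))
    (H : Subgroup G) (hHn : H.Normal) (hHp : ¬ p ∣ H.index)
    (hHmin : ∀ H' : Subgroup G, H'.Normal → ¬ p ∣ H'.index → H ≤ H')
    (L : Subgroup G)
    (hL : L = sInf {T : Subgroup G | T ≤ K ∧ K ≤ Subgroup.normalizer (T : Set G) ∧
        (P : Subgroup G) ≤ Subgroup.normalizer (T : Set G) ∧ ⁅(P : Subgroup G), K⁆ ≤ T}) :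
    H ⊓ Subgroup.normalizer ((P : Subgroup G) : Set G) = (P : Subgroup G) ↔
      L ⊓ Subgroup.centralizer (P : Set G) = ⊥ := by
  have hPK : (P : Subgroup G) ⊔ K = ⊤ := sup_comm K (P : Subgroup G) ▸ hcompl.sup_eq_top
  have hCK : ⁅(P : Subgroup G), K⁆ ≤ K := commutator_le_right _ _
  have := normal_commutator_of_sup_eq_top hPK
  have hLC : L = ⁅(P : Subgroup G), K⁆ := hL ▸ le_antisymm
    (sInf_le ⟨hCK, normalizer_commutator_ge_right _ _, normalizer_commutator_ge_left _ _, le_rfl⟩)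
    (le_sInf fun _ hT => hT.2.2.2)
  have hPH : (P : Subgroup G) ≤ H := P.isPGroup'.le_of_normal_of_not_dvd_index hHp
  have hHCP : H = ⁅(P : Subgroup G), K⁆ ⊔ P := le_antisymm
    (hHmin _ (normal_commutator_sup_of_sup_eq_top hPK)
      fun h => P.not_dvd_index (h.trans (index_dvd_of_le le_sup_right)))
    (sup_le ((commutator_mono hPH le_top).trans (commutator_le_left H ⊤)) hPH)
  rw [hHCP, hLC]
  exact sup_inf_normalizer_eq_iff_inf_centralizer_eq_bot (hcompl.disjoint.mono_left hCK)
end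

section
/- Let G = GL(n,q) with n ≥ 3 and suppose (q^n-1)/(q-1) = p^f for a prime p. Then p^f = |G|_p, i.e., the full p-part of |GL(n,q)| equals (q^n-1)/(q-1). -/
/-!
Write `q ^ n - 1 = (q - 1) * p ^ f` with `p ^ f = ∑_{i<n} q ^ i`. The heart of the matter is that
`q` has multiplicative order exactly `n` modulo `p`. Otherwise `p ∣ q ^ g - 1` for a proper divisor
`g = n / m` of `n`, and the factor `∑_{j<m} (q ^ g) ^ j` of `p ^ f` is a power `p ^ e`; lifting the
exponent gives `e = v_p(m)`, so `p ^ e ≤ m`, whereas a geometric sum with `m ≥ 2` terms exceeds `m`.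
For `p = 2` the same comparison, with the lifting-the-exponent lemma for `p = 2`, rules the case
out altogether. Then in `|GL(n, q)| = ∏_{i<n} (q ^ n - q ^ i)` only the factor `q ^ n - 1`
is divisible by `p`, and its `p`-part is `p ^ f`.
-/

open Finset

lemma lt_geom_sum {q m : ℕ} (hq : 1 < q) (hm : 2 ≤ m) : m < ∑ i ∈ range m, q ^ i :=
  calc m = ∑ _i ∈ range m, 1 := by simp
    _ < ∑ i ∈ range m, q ^ i :=
      sum_lt_sum (fun i _ => Nat.one_le_pow i q (by omega))
        ⟨1, mem_range.2 (by omega), by simpa using hq⟩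

lemma geom_sum_range_mul (q d m : ℕ) :
    ∑ i ∈ range (d * m), q ^ i = (∑ i ∈ range d, q ^ i) * ∑ j ∈ range m, (q ^ d) ^ j := by
  induction m with
  | zero => simp
  | succ m ih =>
    rw [Nat.mul_succ, Finset.sum_range_add, ih, sum_range_succ, mul_add]
    congr 1
    rw [sum_mul]
    exact Finset.sum_congr rfl fun i _ => by ring

lemma not_dvd_of_dvd_sub_one {p a : ℕ} (hp : p ≠ 1) (ha : 1 ≤ a) (h : p ∣ a - 1) : ¬ p ∣ a :=
  fun h' => hp <|
    Nat.eq_one_of_dvd_coprimes ((Nat.coprime_self_sub_left ha).2 (Nat.coprime_one_left a)) h h'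

lemma odd_and_even_of_geom_sum_eq_two_pow {q n f : ℕ} (hn : n ≠ 0) (hf : f ≠ 0)
    (hS : ∑ i ∈ range n, q ^ i = 2 ^ f) : Odd q ∧ Even n := by
  have hS2 : ∑ i ∈ range n, (q : ZMod 2) ^ i = 0 := by
    exact_mod_cast hS ▸ ZMod.natCast_eq_zero_iff_even.2 (Nat.even_pow.2 ⟨even_two, hf⟩)
  rcases Nat.even_or_odd q with hq | hq
  · rw [ZMod.natCast_eq_zero_iff_even.2 hq] at hS2
    simp [zero_pow_eq, hn] at hS2
  · rw [ZMod.natCast_eq_one_iff_odd.2 hq] at hS2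
    simp only [one_pow, sum_const, card_range, nsmul_eq_mul, mul_one] at hS2
    exact ⟨hq, ZMod.natCast_eq_zero_iff_even.1 hS2⟩

lemma geom_sum_ne_two_pow {q n f : ℕ} (hq : 1 < q) (hn : 3 ≤ n) (hf : f ≠ 0) :
    ∑ i ∈ range n, q ^ i ≠ 2 ^ f := by
  intro hS
  obtain ⟨hq_odd, m, rfl⟩ := odd_and_even_of_geom_sum_eq_two_pow (by omega) hf hS
  have hlte := padicValNat.pow_two_sub_one hq hq_odd.not_two_dvd_nat (by omega) ⟨m, rfl⟩
  rw [← geom_sum_mul_of_one_le hq.le, hS, padicValNat.mul (by positivity) (by omega),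
    padicValNat.prime_pow] at hlte
  have hdvd : 2 ^ (f + 1) ∣ (q + 1) * (m + m) := by
    rw [show f + 1 = padicValNat 2 (q + 1) + padicValNat 2 (m + m) by omega, pow_add]
    exact mul_dvd_mul pow_padicValNat_dvd pow_padicValNat_dvd
  have hsplit : 2 ^ (f + 1) = 2 * (q + 1) * ∑ j ∈ range m, (q ^ 2) ^ j := by
    rw [pow_succ, ← hS, ← two_mul, geom_sum_range_mul, geom_sum_two]
    ring
  rw [hsplit, show (q + 1) * (m + m) = 2 * (q + 1) * m by ring] at hdvd
  have hle := Nat.le_of_dvd (by omega) (Nat.dvd_of_mul_dvd_mul_left (by positivity) hdvd)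
  have hlt := lt_geom_sum (Nat.one_lt_pow two_ne_zero hq) (show 2 ≤ m by omega)
  omega

lemma geom_sum_ne_pow_of_dvd_sub_one {p Q m e : ℕ} [Fact p.Prime] (hp : Odd p) (hQ : 1 < Q)
    (hm : 2 ≤ m) (hpQ : p ∣ Q - 1) : ∑ i ∈ range m, Q ^ i ≠ p ^ e := by
  intro hS
  have hlte := padicValNat.pow_sub_pow hp hQ (by simpa using hpQ)
    (not_dvd_of_dvd_sub_one (Fact.out : p.Prime).ne_one hQ.le hpQ) (n := m) (by omega)
  rw [one_pow, ← geom_sum_mul_of_one_le hQ.le, hS,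
    padicValNat.mul (pow_ne_zero e hp.pos.ne') (by omega), padicValNat.prime_pow] at hlte
  have hle : p ^ e ≤ m :=
    Nat.le_of_dvd (by omega) (show e = padicValNat p m by omega ▸ pow_padicValNat_dvd)
  have hlt := lt_geom_sum hQ hm
  omega

lemma not_dvd_pow_sub_one_of_geom_sum_eq_pow {p q n e k : ℕ} [Fact p.Prime] (hp : Odd p)
    (hq : 1 < q) (hS : ∑ i ∈ range n, q ^ i = p ^ e) (he : e ≠ 0) (hk : 0 < k) (hkn : k < n) :
    ¬ p ∣ q ^ k - 1 := by
  intro hpk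
  have hg0 : 0 < k.gcd n := Nat.gcd_pos_of_pos_left n hk
  have hgk : k.gcd n ≤ k := Nat.gcd_le_left n hk
  have hpn : p ∣ q ^ n - 1 :=
    (dvd_pow_self p he).trans (hS ▸ Dvd.intro _ (geom_sum_mul_of_one_le hq.le n))
  have hpg : p ∣ q ^ k.gcd n - 1 := by
    rw [← Nat.pow_sub_one_gcd_pow_sub_one]
    exact Nat.dvd_gcd hpk hpn
  obtain ⟨m, hnm⟩ := Nat.gcd_dvd_right k n
  generalize k.gcd n = g at *
  subst hnm
  have hm : 2 ≤ m := by
    by_contra! hm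
    interval_cases m <;> omega
  have hT : ∑ j ∈ range m, (q ^ g) ^ j ∣ p ^ e :=
    hS ▸ Dvd.intro_left _ (geom_sum_range_mul q g m).symm
  obtain ⟨e', -, hT⟩ := (Nat.dvd_prime_pow Fact.out).1 hT
  exact geom_sum_ne_pow_of_dvd_sub_one hp (Nat.one_lt_pow hg0.ne' hq) hm hpg hT

lemma factorization_card_GL_eq {F : Type*} [Field F] [Fintype F] {n p : ℕ} (hp : p.Prime)
    (hn : 0 < n) (hpq : ¬ p ∣ Fintype.card F)
    (hk : ∀ k, 0 < k → k < n → ¬ p ∣ Fintype.card F ^ k - 1) :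
    (Nat.card (GL (Fin n) F)).factorization p = (Fintype.card F ^ n - 1).factorization p := by
  set q := Fintype.card F
  have hq : 1 < q := Fintype.one_lt_card
  have hne : ∀ i ∈ range n, q ^ n - q ^ i ≠ 0 := fun i hi =>
    Nat.sub_ne_zero_of_lt (Nat.pow_lt_pow_right hq (mem_range.1 hi))
  rw [Matrix.card_GL_field, Fin.prod_univ_eq_prod_range (fun i => q ^ n - q ^ i),
    Nat.factorization_prod hne, Finsupp.finsetSum_apply,
    sum_eq_single_of_mem 0 (mem_range.2 hn), pow_zero]
  intro i hi hi0
  have hi := mem_range.1 hi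
  rw [show q ^ n - q ^ i = q ^ i * (q ^ (n - i) - 1) by
    rw [Nat.mul_sub_one, ← pow_add, Nat.add_sub_cancel' hi.le]]
  refine Nat.factorization_eq_zero_of_not_dvd fun h => ?_
  rcases hp.dvd_mul.1 h with h | h
  · exact hpq (hp.dvd_of_dvd_pow h)
  · exact hk (n - i) (by omega) (by omega) h

theorem stmt15 (n q f p : ℕ) (hn : 3 ≤ n) (hp : p.Prime) (hf : 0 < f)
    (F : Type) [Field F] [Fintype F] (hq : q = Fintype.card F)
    (h : (q ^ n - 1) / (q - 1) = p ^ f) :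
    (Nat.card (GL (Fin n) F)).factorization p = f := by
  have : Fact p.Prime := ⟨hp⟩
  have hq1 : 1 < q := hq ▸ Fintype.one_lt_card
  have hS : ∑ i ∈ range n, q ^ i = p ^ f := by rw [Nat.geomSum_eq hq1, h]
  have hodd : Odd p := hp.odd_of_ne_two <| by
    rintro rfl
    exact geom_sum_ne_two_pow hq1 hn hf.ne' hS
  have hk : ∀ k, 0 < k → k < n → ¬ p ∣ q ^ k - 1 := fun k =>
    not_dvd_pow_sub_one_of_geom_sum_eq_pow hodd hq1 hS hf.ne'
  have hqn : q ^ n - 1 = p ^ f * (q - 1) := by rw [← hS, geom_sum_mul_of_one_le hq1.le]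
  have hpq : ¬ p ∣ q := fun hpq =>
    not_dvd_of_dvd_sub_one hp.ne_one (Nat.one_le_pow _ _ (by omega))
      (hqn ▸ dvd_mul_of_dvd_left (dvd_pow_self p hf.ne') _) (dvd_pow hpq (by omega))
  subst hq
  rw [factorization_card_GL_eq hp (by omega) hpq hk, hqn,
    Nat.factorization_mul (pow_ne_zero _ hp.ne_zero) (by omega), Finsupp.add_apply,
    hp.factorization_pow, Finsupp.single_eq_same,
    Nat.factorization_eq_zero_of_not_dvd (by simpa using hk 1 one_pos (by omega)), add_zero]
end

section
/- Let H be the subgroup of G = GL(n,q) consisting of matrices of block form [[a, *],[0, A]] with a ∈ GF(q)^× and A ∈ GL(n-1,q) (the stabilizer of the span of the first standard basis vector). If (q^n-1)/(q-1) = p^f = |G|_p with n ≥ 3, then H is a p-complement in G, i.e., [G : H] = p^f and p ∤ |H|. -/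
/-- The parabolic subgroup of `GL(n,q)` of block upper triangular matrices with
blocks of sizes `1` and `n-1`, i.e. the stabilizer of the span of the first
standard basis vector: matrices whose first column vanishes off the diagonal. -/
noncomputable def parabolicSubgroup (n : ℕ) [NeZero n] (F : Type) [Field F] :
    Subgroup (GL (Fin n) F) where
  carrier := {g | ∀ i : Fin n, i ≠ 0 → (g : Matrix (Fin n) (Fin n) F) i 0 = 0}
  one_mem' := by
    intro i hi
    simp [Matrix.one_apply, hi]
  mul_mem' := by
    intro a b ha hb i hi
    simp only [Units.val_mul, Matrix.mul_apply]
    refine Finset.sum_eq_zero fun j _ => ?_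
    rcases eq_or_ne j 0 with rfl | hj
    · rw [ha i hi, zero_mul]
    · rw [hb j hj, mul_zero]
  inv_mem' := by
    intro a ha i hi
    have h00 : (a : Matrix (Fin n) (Fin n) F) 0 0 ≠ 0 := by
      intro h0
      have hdet : (a : Matrix (Fin n) (Fin n) F).det = 0 := by
        apply Matrix.det_eq_zero_of_column_eq_zero 0
        intro j
        rcases eq_or_ne j 0 with rfl | hj
        · exact h0
        · exact ha j hj
      have hu : IsUnit (a : Matrix (Fin n) (Fin n) F) := a.isUnit
      rw [Matrix.isUnit_iff_isUnit_det, hdet] at hu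
      exact (by simpa using hu : False)
    have hBA : ((a⁻¹ : GL (Fin n) F) : Matrix (Fin n) (Fin n) F) *
        (a : Matrix (Fin n) (Fin n) F) = 1 := by
      rw [← Units.val_mul, inv_mul_cancel, Units.val_one]
    have h1 : (((a⁻¹ : GL (Fin n) F) : Matrix (Fin n) (Fin n) F) *
        (a : Matrix (Fin n) (Fin n) F)) i 0 = 0 := by
      rw [hBA, Matrix.one_apply_ne hi]
    rw [Matrix.mul_apply] at h1
    rw [Finset.sum_eq_single (0 : Fin n)] at h1
    · exact (mul_eq_zero.mp h1).resolve_right h00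
    · intro j _ hj
      rw [ha j hj, mul_zero]
    · intro hmem
      exact absurd (Finset.mem_univ _) hmem

open Matrix

set_option linter.unusedSectionVars false

section Aux

variable (n : ℕ) [NeZero n] (F : Type) [Field F]

/-- nonzero vectors -/
def NZVec := {v : Fin n → F // v ≠ 0}

variable {n F}

noncomputable instance : MulAction (GL (Fin n) F) (NZVec n F) where
  smul g v := ⟨(g : Matrix (Fin n) (Fin n) F) *ᵥ v.1, by
    intro h0
    apply v.2
    have h1 : ((g⁻¹ : GL (Fin n) F) : Matrix (Fin n) (Fin n) F) *ᵥ
        ((g : Matrix (Fin n) (Fin n) F) *ᵥ v.1) = 0 := by rw [h0, Matrix.mulVec_zero]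
    rwa [Matrix.mulVec_mulVec, ← Units.val_mul, inv_mul_cancel, Units.val_one,
      Matrix.one_mulVec] at h1⟩
  one_smul v := Subtype.ext (by
    show ((1 : GL (Fin n) F) : Matrix (Fin n) (Fin n) F) *ᵥ v.1 = v.1
    rw [Units.val_one, Matrix.one_mulVec])
  mul_smul a b v := Subtype.ext (by
    show ((a * b : GL (Fin n) F) : Matrix (Fin n) (Fin n) F) *ᵥ v.1 =
      (a : Matrix (Fin n) (Fin n) F) *ᵥ ((b : Matrix (Fin n) (Fin n) F) *ᵥ v.1)
    rw [Matrix.mulVec_mulVec, Units.val_mul])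

lemma NZVec.smul_coe (g : GL (Fin n) F) (v : NZVec n F) :
    (g • v : NZVec n F).1 = (g : Matrix (Fin n) (Fin n) F) *ᵥ v.1 := rfl

/-- the base point: first standard basis vector -/
noncomputable def basePt (n : ℕ) [NeZero n] (F : Type) [Field F] : NZVec n F :=
  ⟨Pi.single (0 : Fin n) (1 : F), fun h => one_ne_zero (α := F) (by
    have := congrFun h 0
    simpa using this)⟩

lemma exists_smul_basePt (v : NZVec n F) : ∃ g : GL (Fin n) F, g • basePt n F = v := by
  classical
  obtain ⟨k, hk⟩ : ∃ k, v.1 k ≠ 0 := by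
    by_contra hc
    push_neg at hc
    exact v.2 (funext hc)
  set σ : Equiv.Perm (Fin n) := Equiv.swap 0 k
  set N : Matrix (Fin n) (Fin n) F := (1 : Matrix (Fin n) (Fin n) F).updateCol k v.1
  set M : Matrix (Fin n) (Fin n) F := N * σ.permMatrix F
  have hNdet : N.det = v.1 k := by
    have := Matrix.cramer_apply (1 : Matrix (Fin n) (Fin n) F) v.1 k
    rw [Matrix.cramer_one] at this
    simpa [N] using this.symm
  have hMdet : M.det ≠ 0 := by
    rw [Matrix.det_mul, hNdet, Matrix.det_permutation]
    have hs : ((Equiv.Perm.sign σ : ℤ) : F) ≠ 0 := by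
      rcases Int.units_eq_one_or (Equiv.Perm.sign σ) with h | h <;> simp [h]
    exact mul_ne_zero hk hs
  refine ⟨Matrix.GeneralLinearGroup.mkOfDetNeZero M hMdet, ?_⟩
  apply Subtype.ext
  rw [NZVec.smul_coe]
  have hM0 : ∀ i, M i 0 = v.1 i := by
    intro i
    have : M = N.submatrix id σ.symm := PEquiv.mul_toMatrix_toPEquiv N σ
    rw [this]
    have hσ : σ.symm 0 = k := by simp [σ, Equiv.swap_apply_left]
    simp [Matrix.submatrix_apply, hσ, N, Matrix.updateCol_self]
  have hb : (basePt n F).1 = Pi.single (0 : Fin n) (1 : F) := rfl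
  show M *ᵥ (basePt n F).1 = v.1
  rw [hb, Matrix.mulVec_single_one]
  funext i
  exact hM0 i

lemma stabilizer_basePt_index :
    (MulAction.stabilizer (GL (Fin n) F) (basePt n F)).index = Nat.card (NZVec n F) := by
  rw [MulAction.index_stabilizer]
  have : MulAction.orbit (GL (Fin n) F) (basePt n F) = Set.univ := by
    rw [Set.eq_univ_iff_forall]
    intro v
    obtain ⟨g, hg⟩ := exists_smul_basePt v
    exact ⟨g, hg⟩
  rw [this, Set.ncard_univ]

lemma mem_stabilizer_basePt_iff {g : GL (Fin n) F} :
    g ∈ MulAction.stabilizer (GL (Fin n) F) (basePt n F) ↔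
      ∀ i, (g : Matrix (Fin n) (Fin n) F) i 0 = (Pi.single (0 : Fin n) (1 : F) : Fin n → F) i := by
  rw [MulAction.mem_stabilizer_iff]
  constructor
  · intro hg i
    have := congrArg Subtype.val hg
    rw [NZVec.smul_coe] at this
    have hb : (basePt n F).1 = Pi.single (0 : Fin n) (1 : F) := rfl
    rw [hb, Matrix.mulVec_single_one] at this
    exact congrFun this i
  · intro hg
    apply Subtype.ext
    rw [NZVec.smul_coe]
    have hb : (basePt n F).1 = Pi.single (0 : Fin n) (1 : F) := rfl
    rw [hb, Matrix.mulVec_single_one]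
    exact funext hg

lemma stabilizer_le_parabolic :
    MulAction.stabilizer (GL (Fin n) F) (basePt n F) ≤ parabolicSubgroup n F := by
  intro g hg i hi
  rw [mem_stabilizer_basePt_iff] at hg
  rw [hg i, Pi.single_eq_of_ne hi]

lemma parabolic_diag_ne_zero {g : GL (Fin n) F} (hg : g ∈ parabolicSubgroup n F) :
    (g : Matrix (Fin n) (Fin n) F) 0 0 ≠ 0 := by
  intro h0
  have hdet : (g : Matrix (Fin n) (Fin n) F).det = 0 := by
    apply Matrix.det_eq_zero_of_column_eq_zero 0
    intro j
    rcases eq_or_ne j 0 with rfl | hj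
    · exact h0
    · exact hg j hj
  have hu : IsUnit (g : Matrix (Fin n) (Fin n) F) := g.isUnit
  rw [Matrix.isUnit_iff_isUnit_det, hdet] at hu
  exact (by simpa using hu : False)

/-- the corner-entry homomorphism from the parabolic to `Fˣ` -/
noncomputable def cornerHom (n : ℕ) [NeZero n] (F : Type) [Field F] :
    parabolicSubgroup n F →* Fˣ where
  toFun h := Units.mk0 ((h.1 : Matrix (Fin n) (Fin n) F) 0 0) (parabolic_diag_ne_zero h.2)
  map_one' := by
    apply Units.ext
    simp [Units.val_one, Matrix.one_apply_eq]
  map_mul' a b := by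
    apply Units.ext
    show ((a.1 * b.1 : GL (Fin n) F) : Matrix (Fin n) (Fin n) F) 0 0 =
      (a.1 : Matrix (Fin n) (Fin n) F) 0 0 * (b.1 : Matrix (Fin n) (Fin n) F) 0 0
    rw [Units.val_mul, Matrix.mul_apply, Finset.sum_eq_single (0 : Fin n)]
    · intro j _ hj
      rw [b.2 j hj, mul_zero]
    · intro hmem
      exact absurd (Finset.mem_univ _) hmem

lemma cornerHom_surjective : Function.Surjective (cornerHom n F) := by
  classical
  intro u
  set d : Fin n → F := Function.update (fun _ => (1 : F)) 0 (u : F)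
  have hd : ∀ i, d i ≠ 0 := by
    intro i
    rcases eq_or_ne i 0 with rfl | hi
    · simp [d]
    · simp [d, Function.update_of_ne hi]
  have hdet : (Matrix.diagonal d).det ≠ 0 := by
    rw [Matrix.det_diagonal]
    exact Finset.prod_ne_zero_iff.2 fun i _ => hd i
  refine ⟨⟨Matrix.GeneralLinearGroup.mkOfDetNeZero _ hdet, ?_⟩, ?_⟩
  · intro i hi
    show Matrix.diagonal d i 0 = 0
    exact Matrix.diagonal_apply_ne d hi
  · apply Units.ext
    show Matrix.diagonal d 0 0 = (u : F)
    simp [Matrix.diagonal_apply_eq, d]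

lemma ker_cornerHom :
    (cornerHom n F).ker =
      (MulAction.stabilizer (GL (Fin n) F) (basePt n F)).subgroupOf (parabolicSubgroup n F) := by
  ext h
  rw [MonoidHom.mem_ker, Subgroup.mem_subgroupOf, mem_stabilizer_basePt_iff, Units.ext_iff]
  show (h.1 : Matrix (Fin n) (Fin n) F) 0 0 = 1 ↔ _
  constructor
  · intro h1 i
    rcases eq_or_ne i 0 with rfl | hi
    · rw [h1, Pi.single_eq_same]
    · rw [h.2 i hi, Pi.single_eq_of_ne hi]
  · intro hall
    have := hall 0
    rwa [Pi.single_eq_same] at this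

lemma card_NZVec [Fintype F] :
    Nat.card (NZVec n F) = Fintype.card F ^ n - 1 := by
  classical
  have h1 : Nat.card (NZVec n F) = Nat.card {v : Fin n → F // v ≠ 0} := rfl
  rw [h1, Nat.card_eq_fintype_card]
  have h2 : Fintype.card {v : Fin n → F // ¬ (v = 0)} =
      Fintype.card (Fin n → F) - Fintype.card {v : Fin n → F // v = 0} :=
    Fintype.card_subtype_compl _
  rw [h2, Fintype.card_subtype_eq (0 : Fin n → F)]
  congr 1
  simp [Fintype.card_fun]

end Aux

theorem stmt16 (n q f p : ℕ) (hn : 3 ≤ n) [NeZero n] (hp : p.Prime) (hf : 0 < f)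
    (F : Type) [Field F] [Fintype F] (hq : q = Fintype.card F)
    (h : (q ^ n - 1) / (q - 1) = p ^ f)
    (hpart : (Nat.card (GL (Fin n) F)).factorization p = f) :
    (parabolicSubgroup n F).index = p ^ f ∧
      ¬ p ∣ Nat.card (parabolicSubgroup n F) := by
  classical
  set G := GL (Fin n) F
  set H := parabolicSubgroup n F
  set S := MulAction.stabilizer G (basePt n F)
  have hq2 : 2 ≤ q := by
    rw [hq]
    exact Fintype.one_lt_card
  have hSind : S.index = q ^ n - 1 := by
    rw [stabilizer_basePt_index, card_NZVec, hq]
  have hrel : S.relIndex H = q - 1 := by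
    rw [Subgroup.relIndex, ← ker_cornerHom, Subgroup.index_ker]
    have : (cornerHom n F).range = ⊤ := by
      rw [MonoidHom.range_eq_top]
      exact cornerHom_surjective
    rw [this]
    simp only [Subgroup.card_top]
    rw [Nat.card_eq_fintype_card, Fintype.card_units, hq]
  have hmul : S.relIndex H * H.index = S.index :=
    Subgroup.relIndex_mul_index stabilizer_le_parabolic
  have hdvd : q - 1 ∣ q ^ n - 1 := by
    have := Nat.sub_dvd_pow_sub_pow q 1 n
    simpa using this
  have hkey : q ^ n - 1 = (q - 1) * p ^ f := by
    rw [← h, Nat.mul_div_cancel' hdvd]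
  have hind : H.index = p ^ f := by
    have heq : (q - 1) * H.index = (q - 1) * p ^ f := by
      calc (q - 1) * H.index = S.relIndex H * H.index := by rw [hrel]
        _ = S.index := hmul
        _ = q ^ n - 1 := hSind
        _ = (q - 1) * p ^ f := hkey
    exact Nat.eq_of_mul_eq_mul_left (by omega) heq
  refine ⟨hind, ?_⟩
  have hcard : Nat.card H * H.index = Nat.card G := Subgroup.card_mul_index H
  have hHpos : Nat.card H ≠ 0 := Nat.card_pos.ne'
  have hfac : (Nat.card H).factorization p + f = f := by
    rw [← hcard, hind, Nat.factorization_mul hHpos (pow_ne_zero f hp.pos.ne'),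
      Finsupp.add_apply] at hpart
    have hpf : ((p : ℕ) ^ f).factorization p = f := by
      rw [hp.factorization_pow, Finsupp.single_eq_same]
    rw [hpf] at hpart
    exact hpart
  have h0 : (Nat.card H).factorization p = 0 := by omega
  intro hdvd'
  have := (hp.dvd_iff_one_le_factorization hHpos).1 hdvd'
  omega
end

section
/- Let G be a finite group, p a prime, and suppose Φ_1(1) = |G|_p where Φ_1 is the character of the projective cover of the trivial module in characteristic p. If there exists an irreducible Brauer character β of G that is not a constituent of Φ_1 but whose projective character Φ_β is a summand of Φ_1·Φ_1, then there exists an irreducible constituent φ of Φ_1 with Φ_φ(1)/|G|_p < φ(1). -/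
/-!
Suppose, for a contradiction, that every constituent `V` of `Q₁` has a projective cover `P_V` with
`dim P_V ≥ |G|_p · dim V = dim (V ⊗ Q₁)`. Since `Q₁` maps onto the trivial module, `V ⊗ Q₁` is a
projective module mapping onto `V`, so `P_V` is a direct summand of it (projective covers exist by
Fitting's lemma), and the dimension bound forces `P_V ≅ V ⊗ Q₁`. A nonzero map `V ⊗ Q₁ ⟶ B` would
then give `P_V ≅ P_B`, because the endomorphism ring of the projective cover of a simple module has
no idempotents other than `0` and `1`; but `B` is not a constituent of `Q₁`. So `Hom(V ⊗ Q₁, B) = 0`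
for every constituent `V`, and right exactness of `- ⊗ Q₁` along a composition series of `Q₁` gives
`Hom(Q₁ ⊗ Q₁, B) = 0`, which is impossible when `P_B` is a direct summand of `Q₁ ⊗ Q₁`.
-/

open CategoryTheory MonoidalCategory Module Limits

universe u

open scoped IsMulCommutative in
theorem exists_commute_pow_succ_mul_eq_pow {K A : Type*} [Field K] [Ring A] [Algebra K A]
    [FiniteDimensional K A] (a : A) :
    ∃ (n : ℕ) (b : A), Commute a b ∧ a ^ (n + 1) * b = a ^ n := by
  have : IsArtinianRing (Algebra.adjoin K {a}) := IsArtinianRing.of_finite K _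
  let a' : Algebra.adjoin K {a} := ⟨a, Algebra.self_mem_adjoin_singleton K a⟩
  obtain ⟨n, b, hb⟩ := IsArtinian.exists_pow_succ_smul_dvd a' (1 : Algebra.adjoin K {a})
  exact ⟨n, b, (Commute.all a' b).map (Algebra.adjoin K {a}).val,
    by simpa using congrArg Subtype.val hb⟩

theorem isIdempotentElem_pow_succ_mul_pow_succ {M : Type*} [Monoid M] {a b : M}
    (hab : Commute a b) {n : ℕ} (h : a ^ (n + 1) * b = a ^ n) :
    IsIdempotentElem (a ^ (n + 1) * b ^ (n + 1)) := by
  have absorb : ∀ k, a ^ (n + 1 + k) * b ^ k = a ^ (n + 1) := by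
    intro k
    induction k with
    | zero => simp
    | succ k ih =>
      rw [show n + 1 + (k + 1) = k + 1 + (n + 1) by omega, pow_add, pow_succ' b, mul_assoc,
        ← mul_assoc (a ^ (n + 1)) b, h, ← mul_assoc, ← pow_add, show k + 1 + n = n + 1 + k by omega,
        ih]
  rw [IsIdempotentElem, mul_assoc, ← mul_assoc (b ^ (n + 1)), ← (hab.pow_pow _ _).eq,
    mul_assoc, ← mul_assoc, ← pow_add, ← mul_assoc, absorb]

section Monoidal

variable {C : Type*} [Category C] [MonoidalCategory C]

theorem CategoryTheory.Limits.IsZero.tensor_right [Preadditive C] [MonoidalPreadditive C] {N : C}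
    (hN : IsZero N) (X : C) : IsZero (N ⊗ X) := by
  rw [IsZero.iff_id_eq_zero, ← id_whiskerRight, hN.eq_of_src (𝟙 N) 0,
    MonoidalPreadditive.zero_whiskerRight]

variable [Abelian C] [MonoidalPreadditive C]

theorem exists_whiskerRight_comp_eq_of_comp_eq_zero {N V B : C} (X : C) [HasRightDual X]
    (q : N ⟶ V) [Epi q] (f : N ⊗ X ⟶ B) (hf : kernel.ι q ▷ X ≫ f = 0) :
    ∃ f' : V ⊗ X ⟶ B, q ▷ X ≫ f' = f := by
  have : PreservesColimits (tensorRight X) :=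
    (tensorRightAdjunction X Xᘁ).leftAdjoint_preservesColimits
  have hc := isColimitCoforkMapOfIsColimit' (tensorRight X) _
    (Abelian.epiIsCokernelOfKernel _ (kernelIsKernel q))
  exact ⟨_, (CokernelCofork.IsColimit.desc' hc f hf).2⟩

end Monoidal

section ProjectiveCover

variable {C : Type*} [Category C]

structure IsProjectiveCover {P X : C} (π : P ⟶ X) : Prop where
  projective : Projective P
  epi : Epi π
  essential : ∀ (Q : C) (g : Q ⟶ P), Epi (g ≫ π) → Epi g

variable [Abelian C]

theorem IsProjectiveCover.eq_zero_or_eq_id_of_idempotent {P X : C} [Simple X] {π : P ⟶ X}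
    (hπ : IsProjectiveCover π) {e : P ⟶ P} (he : e ≫ e = e) : e = 0 ∨ e = 𝟙 P := by
  have eq_id_of_epi : ∀ {x : P ⟶ P}, x ≫ x = x → Epi (x ≫ π) → x = 𝟙 P := fun {x} hx h => by
    have := hπ.essential P x h
    rw [← cancel_epi x, hx, Category.comp_id]
  have := hπ.epi
  by_cases h0 : e ≫ π = 0
  · left
    have he' : (𝟙 P - e) ≫ (𝟙 P - e) = 𝟙 P - e := by
      simp only [Preadditive.sub_comp, Preadditive.comp_sub, Category.id_comp, Category.comp_id, he]
      abel
    have : Epi ((𝟙 P - e) ≫ π) := by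
      rwa [Preadditive.sub_comp, h0, sub_zero, Category.id_comp]
    simpa using eq_id_of_epi he' this
  · exact .inr (eq_id_of_epi he (epi_of_nonzero_to_simple h0))

theorem IsProjectiveCover.nonempty_iso_of_ne_zero {P X Q Y : C} [Simple X] [Simple Y]
    {π : P ⟶ X} {π' : Q ⟶ Y} (hπ : IsProjectiveCover π) (hπ' : IsProjectiveCover π')
    {f : P ⟶ Y} (hf : f ≠ 0) : Nonempty (P ≅ Q) := by
  have := hπ.projective
  have := hπ'.projective
  have := hπ'.epi
  have := epi_of_nonzero_to_simple hf
  let h := Projective.factorThru f π'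
  have : Epi h := hπ'.essential P h (by rw [Projective.factorThru_comp]; infer_instance)
  let s := Projective.factorThru (𝟙 Q) h
  have hs : s ≫ h = 𝟙 Q := Projective.factorThru_comp _ _
  have hidem : (h ≫ s) ≫ (h ≫ s) = h ≫ s := by
    rw [Category.assoc, reassoc_of% hs]
  refine (hπ.eq_zero_or_eq_id_of_idempotent hidem).elim (fun h0 => absurd ?_ hf)
    fun h1 => ⟨⟨h, s, h1, hs⟩⟩
  calc f = h ≫ π' := (Projective.factorThru_comp f π').symm
    _ = (h ≫ s) ≫ h ≫ π' := by rw [Category.assoc, reassoc_of% hs]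
    _ = 0 := by rw [h0, zero_comp]

theorem CategoryTheory.Projective.exists_ne_zero_of_mono_of_epi {P X N M : C} [Projective P]
    (hX : ¬IsZero X) (π : P ⟶ X) [Epi π] (ι : N ⟶ M) [Mono ι] (q : N ⟶ X) [Epi q] :
    ∃ u : P ⟶ M, u ≠ 0 := by
  refine ⟨Projective.factorThru π q ≫ ι, fun h => hX ?_⟩
  have hπ : π = 0 := by rw [← Projective.factorThru_comp π q, zero_of_comp_mono ι h, zero_comp]
  have : Epi (0 : P ⟶ X) := hπ ▸ ‹Epi π›
  exact IsZero.of_epi_zero P X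

end ProjectiveCover

namespace FDRep

section

variable {F G : Type u} [Field F] [Monoid G]

theorem epi_iff_surjective {V W : FDRep F G} (f : V ⟶ W) :
    Epi f ↔ Function.Surjective f.hom.hom.hom := by
  rw [← ModuleCat.epi_iff_surjective]
  let Φ := Action.forget (FGModuleCat F) G ⋙ forget₂ (FGModuleCat F) (ModuleCat F)
  exact ⟨fun _ => Φ.map_epi f, fun h => Φ.epi_of_epi_map h⟩

theorem mono_iff_injective {V W : FDRep F G} (f : V ⟶ W) :
    Mono f ↔ Function.Injective f.hom.hom.hom := by
  rw [← ModuleCat.mono_iff_injective]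
  let Φ := Action.forget (FGModuleCat F) G ⋙ forget₂ (FGModuleCat F) (ModuleCat F)
  exact ⟨fun _ => Φ.map_mono f, fun h => Φ.mono_of_mono_map h⟩

theorem isIso_of_mono_of_finrank_le {V W : FDRep F G} (f : V ⟶ W) [Mono f]
    (h : finrank F W ≤ finrank F V) : IsIso f := by
  have hinj := (mono_iff_injective f).1 inferInstance
  have hsurj := (LinearMap.injective_iff_surjective_of_finrank_eq_finrank
    (le_antisymm (LinearMap.finrank_le_finrank_of_injective hinj) h)).1 hinj
  have := (epi_iff_surjective f).2 hsurj
  exact isIso_of_mono_of_epi f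

theorem isIso_of_epi_of_finrank_le {V W : FDRep F G} (f : V ⟶ W) [Epi f]
    (h : finrank F V ≤ finrank F W) : IsIso f := by
  have hsurj := (epi_iff_surjective f).1 inferInstance
  have hinj := (LinearMap.injective_iff_surjective_of_finrank_eq_finrank
    (le_antisymm h (LinearMap.finrank_le_finrank_of_surjective hsurj))).2 hsurj
  have := (mono_iff_injective f).2 hinj
  exact isIso_of_mono_of_epi f

theorem finrank_tensor (V W : FDRep F G) :
    finrank F (V ⊗ W : FDRep F G) = finrank F V * finrank F W :=
  Module.finrank_tensorProduct ..

/-- Fitting's lemma, via strong π-regularity of the finite-dimensional algebra `End W`: the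
idempotent `ε` splits off a proper summand of `W` through which `π` still factors. -/
theorem exists_retract_finrank_lt_of_not_epi {W V : FDRep F G} (π : W ⟶ V) {e : W ⟶ W}
    (he : e ≫ π = π) (hne : ¬Epi e) :
    ∃ (W₁ : FDRep F G) (r : Retract W₁ W), finrank F W₁ < finrank F W ∧ r.r ≫ r.i ≫ π = π := by
  have : FiniteDimensional F (End W) := inferInstanceAs (FiniteDimensional F (W ⟶ W))
  let a : End W := e
  obtain ⟨n, b, hab, hb⟩ := exists_commute_pow_succ_mul_eq_pow (K := F) a
  let fixing : Submonoid (End W) :=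
    { carrier := {x | x ≫ π = π}
      mul_mem' := fun {x y} (hx : x ≫ π = π) (hy : y ≫ π = π) =>
        show (y ≫ x) ≫ π = π by rw [Category.assoc, hx, hy]
      one_mem' := Category.id_comp π }
  have ha : a ∈ fixing := he
  have hbπ : b ∈ fixing := by
    have h : a ^ (n + 1) * b ∈ fixing := hb ▸ fixing.pow_mem ha n
    have h' : a ^ (n + 1) ∈ fixing := fixing.pow_mem ha (n + 1)
    change (b ≫ a ^ (n + 1)) ≫ π = π at h
    change (a ^ (n + 1)) ≫ π = π at h'
    rwa [Category.assoc, h'] at h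
  let ε : End W := a ^ (n + 1) * b ^ (n + 1)
  have hε : ε ≫ ε = ε := (End.mul_def ε ε) ▸ isIdempotentElem_pow_succ_mul_pow_succ hab hb
  obtain ⟨W₁, i, r, hir, hri⟩ := IsIdempotentComplete.idempotents_split W ε hε
  refine ⟨W₁, ⟨i, r, hir⟩, ?_, ?_⟩
  · by_contra hle
    have : Mono i := mono_of_mono_fac hir
    have := isIso_of_mono_of_finrank_le i (not_lt.1 hle)
    have h1 : ε = 1 := by
      rw [← hri, IsIso.eq_inv_of_hom_inv_id hir, IsIso.inv_hom_id, End.one_def]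
    have h2 : (a ^ n * b ^ (n + 1)) ≫ e = 𝟙 W := by
      rw [← End.one_def, ← h1]
      change _ = a ^ (n + 1) * b ^ (n + 1)
      rw [pow_succ' a n, mul_assoc]
      rfl
    have : Epi ((a ^ n * b ^ (n + 1)) ≫ e) := h2 ▸ inferInstance
    exact hne (epi_of_epi (a ^ n * b ^ (n + 1) : End W) e)
  · rw [← Category.assoc, hri]
    exact fixing.mul_mem (fixing.pow_mem ha _) (fixing.pow_mem hbπ _)

theorem exists_retract_isProjectiveCover {W V : FDRep F G} [Projective W] (π : W ⟶ V) [Epi π] :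
    ∃ (Q : FDRep F G) (r : Retract Q W), IsProjectiveCover (r.i ≫ π) := by
  induction h : finrank F W using Nat.strong_induction_on generalizing W with
  | _ d ih =>
  by_cases hess : ∀ (Q : FDRep F G) (g : Q ⟶ W), Epi (g ≫ π) → Epi g
  · exact ⟨W, Retract.refl W, ⟨‹_›, by simpa, by simpa⟩⟩
  push Not at hess
  obtain ⟨Q', g, hgπ, hg⟩ := hess
  let t := Projective.factorThru π (g ≫ π)
  have he : (t ≫ g) ≫ π = π := by simp [t]
  obtain ⟨W₁, r, hlt, hr⟩ := exists_retract_finrank_lt_of_not_epi π he fun _ => hg (epi_of_epi t g)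
  have : Projective W₁ := r.projective
  have : Epi (r.i ≫ π) := by
    rw [← hr] at ‹Epi π›
    exact epi_of_epi r.r _
  obtain ⟨Q, r', hQ⟩ := ih _ (h ▸ hlt) (r.i ≫ π) rfl
  exact ⟨Q, r'.trans r, by simpa [Retract.trans] using hQ⟩

theorem exists_epi_simple {N : FDRep F G} (hN : ¬IsZero N) :
    ∃ (V : FDRep F G) (q : N ⟶ V), Simple V ∧ Epi q := by
  induction h : finrank F N using Nat.strong_induction_on generalizing N with
  | _ d ih =>
  by_cases hs : Simple N
  · exact ⟨N, 𝟙 N, hs, inferInstance⟩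
  obtain ⟨Y, f, hf, hf0, hfiso⟩ : ∃ (Y : FDRep F G) (f : Y ⟶ N), Mono f ∧ f ≠ 0 ∧ ¬IsIso f := by
    by_contra! hno
    refine hs ⟨fun f _ => ⟨fun _ h0 => hN ?_, hno _ f ‹_›⟩⟩
    rw [IsZero.iff_id_eq_zero, ← IsIso.inv_hom_id f]
    simp [h0]
  have hC : ¬IsZero (cokernel f) := fun h0 =>
    hfiso (have := Preadditive.epi_of_isZero_cokernel f h0; isIso_of_mono_of_epi f)
  have hlt : finrank F (cokernel f : FDRep F G) < d := by
    by_contra! hle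
    have := isIso_of_epi_of_finrank_le (cokernel.π f) (h ▸ hle)
    exact hf0 (zero_of_comp_mono (cokernel.π f) (cokernel.condition f))
  obtain ⟨V, q, hV, hq⟩ := ih _ hlt hC rfl
  exact ⟨V, cokernel.π f ≫ q, hV, epi_comp _ _⟩

theorem exists_epi_tensorUnit_of_trivial (T : FDRep F G) (hT : ∀ g : G, T.ρ g = LinearMap.id)
    (hTdim : finrank F T = 1) : ∃ φ : T ⟶ 𝟙_ (FDRep F G), Epi φ := by
  let b := Module.finBasisOfFinrankEq F T hTdim
  refine ⟨⟨FGModuleCat.ofHom (b.coord 0), fun g => ?_⟩, ?_⟩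
  · ext v
    simp [hT]
  · rw [epi_iff_surjective]
    exact fun c => ⟨c • b 0, by change b.coord 0 (c • b 0) = c; simp⟩

end

section Group

variable {F G : Type u} [Field F] [Group G]

instance isLeftAdjoint_tensorLeft (V : FDRep F G) : (tensorLeft V).IsLeftAdjoint :=
  let _ : LeftRigidCategory (FDRep F G) := BraidedCategory.leftRigidCategoryOfRightRigidCategory
  (tensorLeftAdjunction (ᘁV) V).isLeftAdjoint

theorem projective_tensor (V P : FDRep F G) [Projective P] : Projective (V ⊗ P) :=
  let _ : LeftRigidCategory (FDRep F G) := BraidedCategory.leftRigidCategoryOfRightRigidCategory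
  (tensorLeftAdjunction (ᘁV) V).map_projective P ‹_›

theorem hom_tensor_eq_zero_of_simple_subquotients {M X B : FDRep F G}
    (h : ∀ (N V : FDRep F G) (ι : N ⟶ M) (q : N ⟶ V) [Mono ι] [Epi q] [Simple V]
      (f : V ⊗ X ⟶ B), f = 0)
    (f : M ⊗ X ⟶ B) : f = 0 := by
  suffices ∀ (N : FDRep F G) (ι : N ⟶ M) [Mono ι] (f : N ⊗ X ⟶ B), f = 0 from this M (𝟙 M) f
  intro N ι _
  induction hd : finrank F N using Nat.strong_induction_on generalizing N with
  | _ d ih =>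
  intro f
  by_cases hN : IsZero N
  · exact (hN.tensor_right X).eq_of_src f 0
  obtain ⟨V, q, hV, hq⟩ := exists_epi_simple hN
  have hlt : finrank F (kernel q : FDRep F G) < d := by
    by_contra! hle
    have := isIso_of_mono_of_finrank_le (kernel.ι q) (hd ▸ hle)
    have hq0 : q = 0 := by rw [← cancel_epi (kernel.ι q), kernel.condition, comp_zero]
    have : Epi (0 : N ⟶ V) := hq0 ▸ hq
    exact Simple.not_isZero V (IsZero.of_epi_zero N V)
  obtain ⟨f', rfl⟩ := exists_whiskerRight_comp_eq_of_comp_eq_zero X q f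
    (ih _ hlt _ (kernel.ι q ≫ ι) rfl _)
  rw [h N V ι q f', comp_zero]

theorem hom_tensor_eq_zero_of_finrank_le {Q₁ B Q_B : FDRep F G} [Projective Q₁]
    (φ : Q₁ ⟶ 𝟙_ (FDRep F G)) [Epi φ] [Simple B] {π_B : Q_B ⟶ B} (hB : IsProjectiveCover π_B)
    (hB₁ : ∀ u : Q_B ⟶ Q₁, u = 0) {N V : FDRep F G} (ι : N ⟶ Q₁) [Mono ι] (q : N ⟶ V) [Epi q]
    [Simple V]
    (hV : ∀ (Q : FDRep F G) (π : Q ⟶ V), IsProjectiveCover π → 0 < finrank F (Q ⟶ Q₁) →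
      finrank F (V ⊗ Q₁ : FDRep F G) ≤ finrank F Q)
    (f : V ⊗ Q₁ ⟶ B) : f = 0 := by
  have : Epi (V ◁ φ) := (tensorLeft V).map_epi φ
  have := projective_tensor V Q₁
  obtain ⟨Q, r, hQ⟩ := exists_retract_isProjectiveCover (V ◁ φ ≫ (ρ_ V).hom)
  have := hQ.projective
  have := hQ.epi
  obtain ⟨u, hu⟩ := Projective.exists_ne_zero_of_mono_of_epi (Simple.not_isZero V)
    (r.i ≫ V ◁ φ ≫ (ρ_ V).hom) ι q
  have := isIso_of_mono_of_finrank_le r.i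
    (hV Q _ hQ (Module.finrank_pos_iff_exists_ne_zero.2 ⟨u, hu⟩))
  by_contra hf
  obtain ⟨e⟩ := hQ.nonempty_iso_of_ne_zero hB (f := r.i ≫ f)
    fun h => hf ((cancel_epi r.i).1 (h.trans comp_zero.symm))
  exact hu (by rw [← e.hom_inv_id_assoc u, hB₁ (e.inv ≫ u), comp_zero])

end Group

end FDRep

theorem stmt18_general {G : Type} [Group G] (p : ℕ)
    (P : Sylow p G) (F : Type) [Field F]
    -- Q₁ is the projective cover of the trivial module T
    (T Q₁ : FDRep F G) (hTtriv : ∀ g : G, T.ρ g = LinearMap.id)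
    (hTdim : finrank F T = 1)
    (hQ₁ : Projective Q₁) (π₁ : Q₁ ⟶ T) (hπ₁ : Epi π₁)
    -- hypothesis Φ₁(1) = |G|_p
    (hdim : finrank F Q₁ = Nat.card (P : Subgroup G))
    -- β : a simple module B with projective cover Q_B
    (B Q_B : FDRep F G) (hB : Simple B) (hQB : Projective Q_B)
    (π_B : Q_B ⟶ B) (hπB : Epi π_B)
    (hessB : ∀ (Q' : FDRep F G) (g : Q' ⟶ Q_B), Epi (g ≫ π_B) → Epi g)
    -- β is not a constituent of Φ₁
    (hnotconst : finrank F (Q_B ⟶ Q₁) = 0)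
    -- Φ_β is a direct summand of Φ₁ · Φ₁
    (hsummand : ∃ (i : Q_B ⟶ Q₁ ⊗ Q₁) (r : Q₁ ⊗ Q₁ ⟶ Q_B), i ≫ r = 𝟙 Q_B) :
    -- conclusion: some irreducible constituent φ of Φ₁ has c_φ < φ(1)
    ∃ (V Q_V : FDRep F G), Simple V ∧ Projective Q_V ∧
      (∃ π_V : Q_V ⟶ V, Epi π_V ∧
        ∀ (Q' : FDRep F G) (g : Q' ⟶ Q_V), Epi (g ≫ π_V) → Epi g) ∧
      0 < finrank F (Q_V ⟶ Q₁) ∧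
      finrank F Q_V < Nat.card (P : Subgroup G) * finrank F V := by
  by_contra! hcon
  obtain ⟨φ, hφ⟩ := FDRep.exists_epi_tensorUnit_of_trivial T hTtriv hTdim
  have hQ₁Q₁ : ∀ f : Q₁ ⊗ Q₁ ⟶ B, f = 0 :=
    FDRep.hom_tensor_eq_zero_of_simple_subquotients fun N V ι q _ _ _ =>
      FDRep.hom_tensor_eq_zero_of_finrank_le (π₁ ≫ φ) ⟨hQB, hπB, hessB⟩
        (fun u => (Module.finrank_zero_iff.1 hnotconst).elim u 0) ι q
        fun Q π hπ hpos => by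
          rw [FDRep.finrank_tensor, hdim, mul_comm]
          exact hcon V Q ‹_› hπ.projective ⟨π, hπ.epi, hπ.essential⟩ hpos
  obtain ⟨i, r, hir⟩ := hsummand
  have hπB0 : π_B = 0 := by
    rw [← Category.id_comp π_B, ← hir, Category.assoc, hQ₁Q₁ (r ≫ π_B), comp_zero]
  have : Epi (0 : Q_B ⟶ B) := hπB0 ▸ hπB
  exact Simple.not_isZero B (IsZero.of_epi_zero Q_B B)

theorem stmt18 {G : Type} [Group G] [Fintype G] (p : ℕ) [Fact p.Prime]
    (P : Sylow p G) (F : Type) [Field F] [IsAlgClosed F] [CharP F p]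
    -- Q₁ is the projective cover of the trivial module T
    (T Q₁ : FDRep F G) (hTtriv : ∀ g : G, T.ρ g = LinearMap.id)
    (hTdim : finrank F T = 1)
    (hQ₁ : Projective Q₁) (π₁ : Q₁ ⟶ T) (hπ₁ : Epi π₁)
    (hess₁ : ∀ (Q' : FDRep F G) (g : Q' ⟶ Q₁), Epi (g ≫ π₁) → Epi g)
    -- hypothesis Φ₁(1) = |G|_p
    (hdim : finrank F Q₁ = Nat.card (P : Subgroup G))
    -- β : a simple module B with projective cover Q_B
    (B Q_B : FDRep F G) (hB : Simple B) (hQB : Projective Q_B)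
    (π_B : Q_B ⟶ B) (hπB : Epi π_B)
    (hessB : ∀ (Q' : FDRep F G) (g : Q' ⟶ Q_B), Epi (g ≫ π_B) → Epi g)
    -- β is not a constituent of Φ₁
    (hnotconst : finrank F (Q_B ⟶ Q₁) = 0)
    -- Φ_β is a direct summand of Φ₁ · Φ₁
    (hsummand : ∃ (i : Q_B ⟶ Q₁ ⊗ Q₁) (r : Q₁ ⊗ Q₁ ⟶ Q_B), i ≫ r = 𝟙 Q_B) :
    -- conclusion: some irreducible constituent φ of Φ₁ has c_φ < φ(1)
    ∃ (V Q_V : FDRep F G), Simple V ∧ Projective Q_V ∧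
      (∃ π_V : Q_V ⟶ V, Epi π_V ∧
        ∀ (Q' : FDRep F G) (g : Q' ⟶ Q_V), Epi (g ≫ π_V) → Epi g) ∧
      0 < finrank F (Q_V ⟶ Q₁) ∧
      finrank F Q_V < Nat.card (P : Subgroup G) * finrank F V :=
  stmt18_general p P F T Q₁ hTtriv hTdim hQ₁ π₁ hπ₁ hdim B Q_B hB hQB π_B hπB hessB hnotconst
    hsummand
end

section
/- Let N ⊴ G with p not dividing |G:N|, and let θ ∈ IBr_p(N) be a constituent of the restriction φ|_N of φ ∈ IBr_p(G). Then the P-fixed-point dimension satisfies φ^{Fix(P)}(1) = (φ(1)/θ(1))·θ^{Fix(P)}(1), where P ∈ Syl_p(G) (so P ≤ N). -/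
/-!
Since `W` is simple and `f ≠ 0`, `f` embeds `W` into `V` as an `N`-stable submodule `U` with no
nonzero proper `N`-stable submodules. Since `V` is simple, it is the sum of the translates `g • U`,
each again minimal `N`-stable, so a greedy choice writes `V` as a direct sum of `k` of them and
`dim V = k · dim W`. These summands are `P`-stable because `P ≤ N`, so `V^P` is the direct sum of
the `(g • U)^P`. By Frattini's argument `g = m * n` with `m ∈ N_G(P)` and `n ∈ N`; then
`g • U = m • U`, and `m` carries `U^P` onto `(m • U)^P`, whence `dim V^P = k · dim W^P`.
-/

open CategoryTheory Module

theorem Finset.exists_subset_supIndep_sup_eq {α ι : Type*} [Lattice α] [OrderBot α]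
    [IsModularLattice α] [DecidableEq ι] (f : ι → α) (s : Finset ι)
    (h : ∀ i ∈ s, ∀ t ⊆ s, Disjoint (f i) (t.sup f) ∨ f i ≤ t.sup f) :
    ∃ t ⊆ s, t.SupIndep f ∧ t.sup f = s.sup f := by
  induction s using Finset.induction_on with
  | empty => exact ⟨∅, subset_rfl, supIndep_empty f, rfl⟩
  | insert a s ha ih =>
    obtain ⟨t, hts, ht, hsup⟩ :=
      ih fun i hi u hu => h i (mem_insert_of_mem hi) u (hu.trans (subset_insert a s))
    rw [sup_insert, ← hsup]
    rcases h a (mem_insert_self a s) t (hts.trans (subset_insert a s)) with hdisj | hle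
    · exact ⟨insert a t, insert_subset_insert a hts, ht.insert hdisj, sup_insert⟩
    · exact ⟨t, hts.trans (subset_insert a s), ht, (sup_eq_right.mpr hle).symm⟩

theorem Submodule.finrank_finset_sup_of_supIndep {k V ι : Type*} [DivisionRing k]
    [AddCommGroup V] [Module k V] [FiniteDimensional k V] [DecidableEq ι]
    {C : ι → Submodule k V} {t : Finset ι} (ht : t.SupIndep C) :
    finrank k ↥(t.sup C) = ∑ i ∈ t, finrank k (C i) := by
  induction t using Finset.induction_on with
  | empty => simp
  | insert a t ha ih =>
    have hdisj : Disjoint (C a) (t.sup C) :=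
      ht (Finset.subset_insert a t) (Finset.mem_insert_self a t) ha
    rw [Finset.sup_insert, Finset.sum_insert ha, ← ih (ht.subset (Finset.subset_insert a t)),
      ← Submodule.finrank_sup_add_finrank_inf_eq, hdisj.eq_bot, finrank_bot, add_zero]

namespace Representation

section Monoid

variable {k M V : Type*} [CommSemiring k] [Monoid M] [AddCommMonoid V] [Module k V]
  (ρ : Representation k M V)

lemma mem_invtSubmodule_iff_forall_apply_mem {p : Submodule k V} :
    p ∈ ρ.invtSubmodule ↔ ∀ m, ∀ v ∈ p, ρ m v ∈ p := by
  simp only [mem_invtSubmodule, Module.End.mem_invtSubmodule_iff_forall_mem_of_mem]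

lemma invtSubmodule_le_invtSubmodule_comp {M' : Type*} [Monoid M'] (f : M' →* M) :
    ρ.invtSubmodule ≤ invtSubmodule (ρ.comp f) := fun p hp => by
  rw [mem_invtSubmodule_iff_forall_apply_mem] at hp ⊢
  exact fun m => hp (f m)

lemma finset_sup_mem_invtSubmodule {ι : Type*} {C : ι → Submodule k V} (t : Finset ι)
    (hC : ∀ i ∈ t, C i ∈ ρ.invtSubmodule) : t.sup C ∈ ρ.invtSubmodule :=
  Finset.sup_induction (invtSubmodule.bot_mem ρ) (fun _ hA _ hB => ρ.invtSubmodule.sup_mem hA hB)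
    hC

end Monoid

section Group

variable {k G V : Type*} [CommRing k] [Group G] [AddCommGroup V] [Module k V]
  (ρ : Representation k G V)

lemma invariants_comp_of_surjective {H : Type*} [Group H] {f : H →* G}
    (hf : Function.Surjective f) : invariants (ρ.comp f) = ρ.invariants := by
  ext v
  simp only [mem_invariants, MonoidHom.comp_apply]
  exact (hf.forall (p := fun g => ρ g v = v)).symm

lemma invariants_comp_subgroupOf {K L : Subgroup G} (hKL : K ≤ L) :
    invariants ((ρ.comp L.subtype).comp (K.subgroupOf L).subtype) =
      invariants (ρ.comp K.subtype) :=
  invariants_comp_of_surjective (ρ.comp K.subtype)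
    (f := (Subgroup.subgroupOfEquivOfLe hKL).toMonoidHom) (MulEquiv.surjective _)

/-- A fixed vector `a + b` with `a ∈ A`, `b ∈ B` has `ρ g a - a = b - ρ g b ∈ A ⊓ B = ⊥`. -/
lemma invariants_inf_sup_of_disjoint {A B : Submodule k V} (hA : A ∈ ρ.invtSubmodule)
    (hB : B ∈ ρ.invtSubmodule) (hAB : Disjoint A B) :
    ρ.invariants ⊓ (A ⊔ B) = ρ.invariants ⊓ A ⊔ ρ.invariants ⊓ B := by
  refine le_antisymm (fun v hv => ?_)
    (sup_le (inf_le_inf_left _ le_sup_left) (inf_le_inf_left _ le_sup_right))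
  obtain ⟨hfix, hv⟩ := Submodule.mem_inf.mp hv
  obtain ⟨a, ha, b, hb, rfl⟩ := Submodule.mem_sup.mp hv
  rw [mem_invtSubmodule_iff_forall_apply_mem] at hA hB
  have hfix_a : ∀ g, ρ g a = a := fun g => by
    have hab : ρ g a - a = b - ρ g b := by
      rw [sub_eq_sub_iff_add_eq_add, ← map_add, hfix g, add_comm]
    rw [← sub_eq_zero, ← Submodule.mem_bot k, ← hAB.eq_bot]
    exact ⟨sub_mem (hA g a ha) ha, hab ▸ sub_mem hb (hB g b hb)⟩
  have hfix_b : ∀ g, ρ g b = b := fun g => by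
    simpa [hfix_a g] using hfix g
  exact Submodule.mem_sup.mpr ⟨a, ⟨hfix_a, ha⟩, b, ⟨hfix_b, hb⟩, rfl⟩

lemma map_map_inv (T : Submodule k V) (g : G) : (T.map (ρ g⁻¹)).map (ρ g) = T := by
  rw [← Submodule.map_comp, ← Module.End.mul_eq_comp, ← map_mul, mul_inv_cancel, map_one,
    Module.End.one_eq_id, Submodule.map_id]

lemma map_inv_map (T : Submodule k V) (g : G) : (T.map (ρ g)).map (ρ g⁻¹) = T := by
  simpa using map_map_inv ρ T g⁻¹

lemma finrank_map_apply (T : Submodule k V) (g : G) : finrank k ↥(T.map (ρ g)) = finrank k T :=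
  (Submodule.equivMapOfInjective _ (apply_bijective ρ g).injective T).finrank_eq.symm

lemma map_eq_of_mem_invtSubmodule {T : Submodule k V} (hT : T ∈ ρ.invtSubmodule) (g : G) :
    T.map (ρ g) = T := by
  rw [mem_invtSubmodule_iff_forall_apply_mem] at hT
  refine le_antisymm (Submodule.map_le_iff_le_comap.mpr fun v hv => hT g v hv) fun v hv => ?_
  exact ⟨ρ g⁻¹ v, hT g⁻¹ v hv, self_inv_apply ρ g v⟩

lemma iSup_map_mem_invtSubmodule (U : Submodule k V) :
    (⨆ g, U.map (ρ g)) ∈ ρ.invtSubmodule := by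
  simp only [mem_invtSubmodule, Module.End.mem_invtSubmodule_iff_map_le, Submodule.map_iSup]
  intro h
  refine iSup_le fun g => ?_
  rw [← Submodule.map_comp, ← Module.End.mul_eq_comp, ← map_mul]
  exact le_iSup (fun g => U.map (ρ g)) (h * g)

lemma map_invariants_of_mem_normalizer {H : Subgroup G} {g : G}
    (hg : g ∈ Subgroup.normalizer (H : Set G)) :
    (invariants (ρ.comp H.subtype)).map (ρ g) = invariants (ρ.comp H.subtype) := by
  have hmaps : ∀ x ∈ Subgroup.normalizer (H : Set G), ∀ v ∈ invariants (ρ.comp H.subtype),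
      ρ x v ∈ invariants (ρ.comp H.subtype) := fun x hx v hv h => by
    have hconj : x⁻¹ * h * x ∈ H := by
      simpa using (Subgroup.mem_normalizer_iff.mp (inv_mem hx) h).mp h.2
    have hfix := hv ⟨_, hconj⟩
    simp only [MonoidHom.comp_apply, Subgroup.subtype_apply] at hfix ⊢
    rwa [← inv_apply_eq_iff, ← Module.End.mul_apply, ← map_mul, ← Module.End.mul_apply,
      ← map_mul]
  refine le_antisymm (Submodule.map_le_iff_le_comap.mpr fun v hv => hmaps g hg v hv)
    fun v hv => ?_
  exact ⟨ρ g⁻¹ v, hmaps g⁻¹ (inv_mem hg) v hv, self_inv_apply ρ g v⟩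

lemma finrank_invariants_inf_map_of_mem_normalizer {H : Subgroup G} {g : G}
    (hg : g ∈ Subgroup.normalizer (H : Set G)) (U : Submodule k V) :
    finrank k ↥(invariants (ρ.comp H.subtype) ⊓ U.map (ρ g)) =
      finrank k ↥(invariants (ρ.comp H.subtype) ⊓ U) := by
  rw [← finrank_map_apply ρ (_ ⊓ U) g, Submodule.map_inf _ (apply_bijective ρ g).injective,
    map_invariants_of_mem_normalizer ρ hg]

section Normal

variable {N : Subgroup G} [N.Normal]

lemma map_mem_invtSubmodule_comp_subtype {U : Submodule k V}
    (hU : U ∈ invtSubmodule (ρ.comp N.subtype)) (g : G) :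
    U.map (ρ g) ∈ invtSubmodule (ρ.comp N.subtype) := by
  rw [mem_invtSubmodule_iff_forall_apply_mem] at hU ⊢
  rintro ⟨n, hn⟩ _ ⟨u, hu, rfl⟩
  refine ⟨ρ (g⁻¹ * n * g) u,
    hU ⟨g⁻¹ * n * g, by simpa using ‹N.Normal›.conj_mem n hn g⁻¹⟩ u hu, ?_⟩
  simp only [MonoidHom.comp_apply, Subgroup.subtype_apply, ← Module.End.mul_apply, ← map_mul]
  group

lemma eq_bot_or_eq_map_of_le_map {U : Submodule k V}
    (hU : ∀ T ∈ invtSubmodule (ρ.comp N.subtype), T ≤ U → T = ⊥ ∨ T = U) (g : G) :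
    ∀ T ∈ invtSubmodule (ρ.comp N.subtype), T ≤ U.map (ρ g) → T = ⊥ ∨ T = U.map (ρ g) := by
  intro T hT hle
  have hle' : T.map (ρ g⁻¹) ≤ U := map_inv_map ρ U g ▸ Submodule.map_mono hle
  rw [← map_map_inv ρ T g]
  rcases hU _ (map_mem_invtSubmodule_comp_subtype ρ hT g⁻¹) hle' with h | h <;> rw [h]
  · exact Or.inl (Submodule.map_bot _)
  · exact Or.inr rfl

open scoped Pointwise in
lemma finrank_invariants_inf_map_of_sylow_le {p : ℕ} [Fact p.Prime] [Finite G] (P : Sylow p G)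
    (hPN : (P : Subgroup G) ≤ N) {U : Submodule k V}
    (hU : U ∈ invtSubmodule (ρ.comp N.subtype)) (g : G) :
    finrank k ↥(invariants (ρ.comp (P : Subgroup G).subtype) ⊓ U.map (ρ g)) =
      finrank k ↥(invariants (ρ.comp (P : Subgroup G).subtype) ⊓ U) := by
  obtain ⟨m, hm, n, hn, rfl⟩ : g ∈ (Subgroup.normalizer (P : Set G) : Set G) * (N : Set G) := by
    rw [← Subgroup.mul_normal, Sylow.normalizer_sup_eq_top' P hPN]
    trivial
  rw [map_mul, Module.End.mul_eq_comp, Submodule.map_comp,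
    show U.map (ρ n) = U from map_eq_of_mem_invtSubmodule (ρ.comp N.subtype) hU ⟨n, hn⟩,
    finrank_invariants_inf_map_of_mem_normalizer ρ hm]

theorem exists_supIndep_map_eq_top [Finite G] (hρ : ∀ T ∈ ρ.invtSubmodule, T = ⊥ ∨ T = ⊤)
    {U : Submodule k V} (hU : U ∈ invtSubmodule (ρ.comp N.subtype)) (hU₀ : U ≠ ⊥)
    (hUmin : ∀ T ∈ invtSubmodule (ρ.comp N.subtype), T ≤ U → T = ⊥ ∨ T = U) :
    ∃ t : Finset G, t.SupIndep (fun g => U.map (ρ g)) ∧ t.sup (fun g => U.map (ρ g)) = ⊤ := by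
  classical
  have := Fintype.ofFinite G
  have hmem (g : G) : U.map (ρ g) ∈ invtSubmodule (ρ.comp N.subtype) :=
    map_mem_invtSubmodule_comp_subtype ρ hU g
  have hdich : ∀ g ∈ Finset.univ, ∀ s ⊆ Finset.univ,
      Disjoint (U.map (ρ g)) (s.sup fun g => U.map (ρ g)) ∨
        U.map (ρ g) ≤ s.sup fun g => U.map (ρ g) := fun g _ s _ => by
    have hinf := Sublattice.inf_mem (hmem g) (finset_sup_mem_invtSubmodule _ s fun i _ => hmem i)
    rcases eq_bot_or_eq_map_of_le_map ρ hUmin g _ hinf inf_le_left with h | h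
    · exact Or.inl (disjoint_iff.mpr h)
    · exact Or.inr (inf_eq_left.mp h)
  obtain ⟨t, -, ht, hsup⟩ := Finset.exists_subset_supIndep_sup_eq _ _ hdich
  refine ⟨t, ht, ?_⟩
  rw [hsup, Finset.sup_univ_eq_iSup]
  refine (hρ _ (iSup_map_mem_invtSubmodule ρ U)).resolve_left fun h => hU₀ ?_
  rw [eq_bot_iff, ← h]
  simpa [Module.End.one_eq_id] using le_iSup (fun g => U.map (ρ g)) 1

end Normal

end Group

section Field

variable {k G V : Type*} [Field k] [Group G] [AddCommGroup V] [Module k V]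
  [FiniteDimensional k V] (ρ : Representation k G V)

lemma finrank_invariants_inf_finset_sup {ι : Type*} [DecidableEq ι] {C : ι → Submodule k V}
    {t : Finset ι} (hC : ∀ i ∈ t, C i ∈ ρ.invtSubmodule) (ht : t.SupIndep C) :
    finrank k ↥(ρ.invariants ⊓ t.sup C) = ∑ i ∈ t, finrank k ↥(ρ.invariants ⊓ C i) := by
  suffices ρ.invariants ⊓ t.sup C = t.sup fun i => ρ.invariants ⊓ C i by
    rw [this, Submodule.finrank_finset_sup_of_supIndep (ht.mono fun _ _ => inf_le_right)]
  induction t using Finset.induction_on with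
  | empty => simp
  | insert a t ha ih =>
    have hC' : ∀ i ∈ t, C i ∈ ρ.invtSubmodule := fun i hi => hC i (Finset.mem_insert_of_mem hi)
    rw [Finset.sup_insert, Finset.sup_insert, ← ih hC' (ht.subset (Finset.subset_insert a t)),
      invariants_inf_sup_of_disjoint ρ (hC a (Finset.mem_insert_self a t))
        (finset_sup_mem_invtSubmodule ρ t hC')
        (ht (Finset.subset_insert a t) (Finset.mem_insert_self a t) ha)]

theorem finrank_invariants_mul_finrank_eq [Finite G] {N : Subgroup G} [N.Normal] {p : ℕ}
    [Fact p.Prime] (hρ : ∀ T ∈ ρ.invtSubmodule, T = ⊥ ∨ T = ⊤) (P : Sylow p G)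
    (hPN : (P : Subgroup G) ≤ N) {U : Submodule k V}
    (hU : U ∈ invtSubmodule (ρ.comp N.subtype)) (hU₀ : U ≠ ⊥)
    (hUmin : ∀ T ∈ invtSubmodule (ρ.comp N.subtype), T ≤ U → T = ⊥ ∨ T = U) :
    finrank k (invariants (ρ.comp (P : Subgroup G).subtype)) * finrank k U =
      finrank k ↥(invariants (ρ.comp (P : Subgroup G).subtype) ⊓ U) * finrank k V := by
  classical
  obtain ⟨t, ht, htop⟩ := exists_supIndep_map_eq_top ρ hρ hU hU₀ hUmin
  have hmemP (g : G) : U.map (ρ g) ∈ invtSubmodule (ρ.comp (P : Subgroup G).subtype) :=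
    invtSubmodule_le_invtSubmodule_comp (ρ.comp N.subtype) (Subgroup.inclusion hPN)
      (map_mem_invtSubmodule_comp_subtype ρ hU g)
  have hV : finrank k V = t.card * finrank k U := by
    rw [← finrank_top k V, ← htop, Submodule.finrank_finset_sup_of_supIndep ht]
    simp [finrank_map_apply]
  have hInv : finrank k (invariants (ρ.comp (P : Subgroup G).subtype)) =
      t.card * finrank k ↥(invariants (ρ.comp (P : Subgroup G).subtype) ⊓ U) := by
    conv_lhs => rw [← inf_top_eq (invariants _), ← htop]
    rw [finrank_invariants_inf_finset_sup _ (fun g _ => hmemP g) ht]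
    simp [finrank_invariants_inf_map_of_sylow_le ρ P hPN hU]
  rw [hV, hInv]
  ring

end Field

namespace IsIntertwiningMap

variable {k G V W : Type*} [CommRing k] [Group G] [AddCommGroup V] [Module k V]
  [AddCommGroup W] [Module k W] {σ : Representation k G W} {τ : Representation k G V}
  {φ : W →ₗ[k] V}

lemma comp {H : Type*} [Group H] (hφ : IsIntertwiningMap σ τ φ) (f : H →* G) :
    IsIntertwiningMap (σ.comp f) (τ.comp f) φ :=
  ⟨fun h => hφ.isIntertwining (f h)⟩

lemma comap_mem_invtSubmodule (hφ : IsIntertwiningMap σ τ φ) {T : Submodule k V}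
    (hT : T ∈ τ.invtSubmodule) : T.comap φ ∈ σ.invtSubmodule := by
  rw [mem_invtSubmodule_iff_forall_apply_mem] at hT ⊢
  intro g w hw
  simpa only [Submodule.mem_comap, hφ.isIntertwining] using hT g _ hw

lemma range_mem_invtSubmodule (hφ : IsIntertwiningMap σ τ φ) :
    LinearMap.range φ ∈ τ.invtSubmodule := by
  rw [mem_invtSubmodule_iff_forall_apply_mem]
  rintro g _ ⟨w, rfl⟩
  exact ⟨σ g w, hφ.isIntertwining g w⟩

lemma injective (hφ : IsIntertwiningMap σ τ φ) (hσ : ∀ T ∈ σ.invtSubmodule, T = ⊥ ∨ T = ⊤)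
    (hφ₀ : φ ≠ 0) : Function.Injective φ := by
  rw [← LinearMap.ker_eq_bot]
  refine (hσ _ (hφ.comap_mem_invtSubmodule (invtSubmodule.bot_mem τ))).resolve_right fun h => ?_
  exact hφ₀ (LinearMap.ker_eq_top.mp h)

lemma eq_bot_or_eq_range (hφ : IsIntertwiningMap σ τ φ)
    (hσ : ∀ T ∈ σ.invtSubmodule, T = ⊥ ∨ T = ⊤) :
    ∀ T ∈ τ.invtSubmodule, T ≤ LinearMap.range φ → T = ⊥ ∨ T = LinearMap.range φ := by
  intro T hT hle
  rcases hσ _ (hφ.comap_mem_invtSubmodule hT) with h | h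
  · left
    rw [← Submodule.map_comap_eq_of_le hle, h, Submodule.map_bot]
  · right
    exact le_antisymm hle (LinearMap.range_le_iff_comap.mpr h)

lemma map_invariants (hφ : IsIntertwiningMap σ τ φ) (hinj : Function.Injective φ) :
    σ.invariants.map φ = τ.invariants ⊓ LinearMap.range φ := by
  ext v
  simp only [Submodule.mem_map, Submodule.mem_inf, LinearMap.mem_range, mem_invariants]
  constructor
  · rintro ⟨w, hw, rfl⟩
    exact ⟨fun g => by rw [← hφ.isIntertwining, hw], w, rfl⟩
  · rintro ⟨hv, w, rfl⟩
    exact ⟨w, fun g => hinj (by rw [hφ.isIntertwining, hv]), rfl⟩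

end IsIntertwiningMap

end Representation

namespace FDRep

variable {k G : Type*} [Field k] [Group G]

lemma isIntertwiningMap_hom {X Y : FDRep k G} (f : X ⟶ Y) :
    Representation.IsIntertwiningMap X.ρ Y.ρ f.hom.hom.hom :=
  ⟨fun g v => LinearMap.congr_fun (congrArg (fun q => q.hom.hom) (f.comm g)) v⟩

lemma eq_bot_or_eq_top_of_mem_invtSubmodule (X : FDRep k G) [Simple X] {S : Submodule k X}
    (hS : S ∈ Representation.invtSubmodule X.ρ) : S = ⊥ ∨ S = ⊤ := by
  refine or_iff_not_imp_left.mpr fun hS₀ => ?_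
  let Y : FDRep k G := FDRep.of (Subrepresentation.toRepresentation
    ⟨S, (Representation.mem_invtSubmodule_iff_forall_apply_mem X.ρ).mp hS⟩)
  let ι : Y ⟶ X := ⟨FGModuleCat.ofHom S.subtype, fun g => rfl⟩
  have : Mono ι := ConcreteCategory.mono_of_injective ι S.subtype_injective
  have hι : ι ≠ 0 := fun h => by
    obtain ⟨v, hv, hv₀⟩ := Submodule.exists_mem_ne_zero_of_ne_bot hS₀
    exact hv₀ (congrArg (fun q => q.hom.hom.hom ⟨v, hv⟩) h)
  have : IsIso ι := (Simple.mono_isIso_iff_nonzero ι).mpr hι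
  rw [← Submodule.range_subtype S]
  exact LinearMap.range_eq_top.mpr (ConcreteCategory.bijective_of_isIso ι).2

end FDRep

open Representation

theorem stmt19_general {G : Type} [Group G] [Fintype G] (p : ℕ) [Fact p.Prime]
    (P : Sylow p G) (N : Subgroup G) [N.Normal]
    (hPN : (P : Subgroup G) ≤ N)
    (F : Type) [Field F]
    (V : FDRep F G) (hV : Simple V) (W : FDRep F N) (hW : Simple W)
    (f : W ⟶ (Action.res (FGModuleCat F) N.subtype).obj V)
    (hf : f ≠ 0) :
    finrank F (Representation.invariants
        (V.ρ.comp (P : Subgroup G).subtype : Representation F (P : Subgroup G) V)) *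
      finrank F W =
    finrank F (Representation.invariants
        (W.ρ.comp ((P : Subgroup G).subgroupOf N).subtype :
          Representation F ((P : Subgroup G).subgroupOf N) W)) *
      finrank F V := by
  let φ : W →ₗ[F] V := f.hom.hom.hom
  have hφ : IsIntertwiningMap W.ρ (V.ρ.comp N.subtype) φ := FDRep.isIntertwiningMap_hom f
  have hW_irred : ∀ T ∈ invtSubmodule W.ρ, T = ⊥ ∨ T = ⊤ := fun T hT =>
    FDRep.eq_bot_or_eq_top_of_mem_invtSubmodule W hT
  have hφ₀ : φ ≠ 0 := fun h => hf (by ext w; exact LinearMap.congr_fun h w)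
  have hinj := hφ.injective hW_irred hφ₀
  have hW_inv : finrank F (invariants (W.ρ.comp ((P : Subgroup G).subgroupOf N).subtype)) =
      finrank F ↥(invariants (V.ρ.comp (P : Subgroup G).subtype) ⊓ LinearMap.range φ) := by
    rw [← invariants_comp_subgroupOf V.ρ hPN,
      ← (hφ.comp ((P : Subgroup G).subgroupOf N).subtype).map_invariants hinj]
    exact (Submodule.equivMapOfInjective _ hinj _).finrank_eq
  rw [hW_inv, ← LinearMap.finrank_range_of_inj hinj]
  exact finrank_invariants_mul_finrank_eq V.ρ
    (fun T hT => FDRep.eq_bot_or_eq_top_of_mem_invtSubmodule V hT) P hPN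
    hφ.range_mem_invtSubmodule (LinearMap.range_eq_bot.not.mpr hφ₀) (hφ.eq_bot_or_eq_range hW_irred)

theorem stmt19 {G : Type} [Group G] [Fintype G] (p : ℕ) [Fact p.Prime]
    (P : Sylow p G) (N : Subgroup G) [N.Normal] (hind : ¬ p ∣ N.index)
    (hPN : (P : Subgroup G) ≤ N)
    (F : Type) [Field F] [IsAlgClosed F] [CharP F p]
    (V : FDRep F G) (hV : Simple V) (W : FDRep F N) (hW : Simple W)
    (f : W ⟶ (Action.res (FGModuleCat F) N.subtype).obj V)
    (hf : f ≠ 0) :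
    finrank F (Representation.invariants
        (V.ρ.comp (P : Subgroup G).subtype : Representation F (P : Subgroup G) V)) *
      finrank F W =
    finrank F (Representation.invariants
        (W.ρ.comp ((P : Subgroup G).subgroupOf N).subtype :
          Representation F ((P : Subgroup G).subgroupOf N) W)) *
      finrank F V :=
  stmt19_general p P N hPN F V hV W hW f hf
end
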